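/- Let scale, B_e, B_c, n be positive integers with 2·n·B_e·B_c < scale. If e and c are integer polynomials of degree less than n with coefficient bounds B_e and B_c respectively, and m0, m1 are distinct integers, then the sign of (m0 - m1)·scale + (e·c evaluated at any fixed coefficient index) equals the sign of m0 - m1. -/

import Mathlib

/-!
The coefficient `(e * c)_k = ∑_{i < n} e_i c_{k-i}` has at most `n` nonzero terms, each of size at
most `B_e B_c`, so `|(e * c)_k| ≤ n B_e B_c < scale`. Since `|m0 - m1| ≥ 1`, the term
`(m0 - m1) · scale` has absolute value at least `scale` and therefore decides the sign.
-/

open Polynomial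

theorem Polynomial.abs_coeff_mul_le {R : Type*} [CommRing R] [LinearOrder R] [IsStrictOrderedRing R]
    {p q : R[X]} {n : ℕ} {Bp Bq : R} (hp : p.natDegree < n)
    (hbp : ∀ i, |p.coeff i| ≤ Bp) (hbq : ∀ i, |q.coeff i| ≤ Bq) (k : ℕ) :
    |(p * q).coeff k| ≤ n * Bp * Bq := by
  have hBp : 0 ≤ Bp := (abs_nonneg _).trans (hbp 0)
  have hBq : 0 ≤ Bq := (abs_nonneg _).trans (hbq 0)
  have hterm (i : ℕ) : |(C (p.coeff i) * X ^ i * q).coeff k| ≤ Bp * Bq := by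
    rw [mul_assoc, coeff_C_mul, coeff_X_pow_mul', abs_mul]
    refine mul_le_mul (hbp i) ?_ (abs_nonneg _) hBp
    split_ifs
    · exact hbq _
    · simpa using hBq
  rw [p.as_sum_range_C_mul_X_pow' hp, Finset.sum_mul, finsetSum_coeff]
  calc |∑ i ∈ Finset.range n, (C (p.coeff i) * X ^ i * q).coeff k|
      ≤ ∑ i ∈ Finset.range n, |(C (p.coeff i) * X ^ i * q).coeff k| :=
        Finset.abs_sum_le_sum_abs _ _
    _ ≤ ∑ _i ∈ Finset.range n, Bp * Bq := Finset.sum_le_sum fun i _ => hterm i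
    _ = n * Bp * Bq := by rw [Finset.sum_const, Finset.card_range, nsmul_eq_mul, mul_assoc]

theorem Int.sign_mul_add_of_abs_lt {d s x : ℤ} (hd : d ≠ 0) (hx : |x| < s) :
    (d * s + x).sign = d.sign := by
  obtain ⟨hlo, hhi⟩ := abs_lt.mp hx
  rcases hd.lt_or_gt with hneg | hpos
  · have : d * s + x < 0 := by nlinarith
    rw [Int.sign_eq_neg_one_of_neg this, Int.sign_eq_neg_one_of_neg hneg]
  · have : 0 < d * s + x := by nlinarith
    rw [Int.sign_eq_one_of_pos this, Int.sign_eq_one_of_pos hpos]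

theorem stmt_5_general (n : ℕ) (scale Be Bc : ℤ)
    (hdom : 2 * (n : ℤ) * Be * Bc < scale)
    (e c : Polynomial ℤ) (hde : e.natDegree < n)
    (hbe : ∀ i, |e.coeff i| ≤ Be) (hbc : ∀ i, |c.coeff i| ≤ Bc)
    (m0 m1 : ℤ) (hne : m0 ≠ m1) :
    ∀ k, Int.sign ((m0 - m1) * scale + (e * c).coeff k) = Int.sign (m0 - m1) := by
  intro k
  have hnoise := abs_coeff_mul_le hde hbe hbc k
  have hnonneg : 0 ≤ (n : ℤ) * Be * Bc := (abs_nonneg _).trans hnoise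
  exact Int.sign_mul_add_of_abs_lt (sub_ne_zero.mpr hne) (by linarith)

theorem stmt_5 (n : ℕ) (scale Be Bc : ℤ) (hscale : 0 < scale)
    (hBe : 0 < Be) (hBc : 0 < Bc) (hn : 0 < n)
    (hdom : 2 * (n : ℤ) * Be * Bc < scale)
    (e c : Polynomial ℤ) (hde : e.natDegree < n) (hdc : c.natDegree < n)
    (hbe : ∀ i, |e.coeff i| ≤ Be) (hbc : ∀ i, |c.coeff i| ≤ Bc)
    (m0 m1 : ℤ) (hne : m0 ≠ m1) :
    ∀ k, Int.sign ((m0 - m1) * scale + (e * c).coeff k) = Int.sign (m0 - m1) :=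
  stmt_5_general n scale Be Bc hdom e c hde hbe hbc m0 m1 hne
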